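/- arXiv:2409.08646 — 2 statements merged into one kernel-verified Lean document; each statement's English description precedes it below -/
import Mathlib

section
/- Let F ∈ ℝ^{3×3} with det F > 0, and let F = R√C be its polar decomposition, where C = FᵀF and R = F(√C)^{-1}. Then R ∈ SO(3) and dist(F, SO(3)) = |F − R| = |√C − I|, where |·| is the Frobenius norm and dist(F, SO(3)) = inf_{Q ∈ SO(3)} |F − Q|. -/
open Matrix Set

noncomputable section

abbrev M3 := Matrix (Fin 3) (Fin 3) ℝ

/-- Frobenius norm on `3×3` real matrices. -/
def frob (A : M3) : ℝ := Real.sqrt (∑ i, ∑ j, (A i j) ^ 2)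

/-- The rotation group `SO(3)`. -/
def SO3 : Set M3 := {R : M3 | Rᵀ * R = 1 ∧ R.det = 1}

/-- Frobenius distance to `SO(3)`. -/
def distSO3 (F : M3) : ℝ := sInf ((fun Q => frob (F - Q)) '' SO3)

namespace Matrix.PosSemidef

open scoped ComplexOrder in
/-- The positive semidefinite square root of a positive semidefinite matrix
(the definition `Matrix.PosSemidef.sqrt` of Mathlib, December 2024). -/
def sqrt {n : Type*} [Fintype n] [DecidableEq n] {𝕜 : Type*} [RCLike 𝕜]
    {A : Matrix n n 𝕜} (hA : PosSemidef A) : Matrix n n 𝕜 :=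
  hA.1.eigenvectorUnitary.1 * diagonal ((↑) ∘ (√·) ∘ hA.1.eigenvalues) *
    (star hA.1.eigenvectorUnitary : Matrix n n 𝕜)

end Matrix.PosSemidef

/-!
Put `B = √(FᵀF)`. Since `B` is symmetric with `B² = FᵀF` and `det B = |det F| > 0`, the factor
`R = F B⁻¹` satisfies `RᵀR = B⁻¹ (FᵀF) B⁻¹ = 1`, so `R ∈ SO(3)` and `F = R B`. Left
multiplication by an orthogonal matrix preserves the Frobenius norm, hence `|F - R| = |B - 1|`
and `|F - Q| = |B - RᵀQ|`; for orthogonal `U`, `|B - U|² = tr B² - 2 tr (B U) + 3`. Everything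
thus reduces to `tr (B U) ≤ tr B` for positive semidefinite `B`, which holds because
`2 (tr B - tr (B U)) = |U √B - √B|²`.
-/

namespace Matrix.PosSemidef

open scoped ComplexOrder

variable {n 𝕜 : Type*} [Fintype n] [DecidableEq n] [RCLike 𝕜] {A : Matrix n n 𝕜}

lemma sqrt_mul_self (hA : A.PosSemidef) : hA.sqrt * hA.sqrt = A := by
  set U : Matrix n n 𝕜 := hA.1.eigenvectorUnitary.1
  set E := diagonal ((RCLike.ofReal : ℝ → 𝕜) ∘ (√·) ∘ hA.1.eigenvalues)
  suffices U * (E * (star U * U) * E) * star U = A by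
    simpa only [PosSemidef.sqrt, E, U, ← mul_assoc] using this
  have hU : star U * U = 1 := by simp [U]
  rw [hU, mul_one, diagonal_mul_diagonal]
  conv_rhs => rw [hA.1.spectral_theorem, Unitary.conjStarAlgAut_apply]
  congr 3
  funext i
  simp [← RCLike.ofReal_mul, Real.mul_self_sqrt (hA.eigenvalues_nonneg i)]

lemma posSemidef_sqrt (hA : A.PosSemidef) : hA.sqrt.PosSemidef := by
  have hE : (diagonal ((RCLike.ofReal : ℝ → 𝕜) ∘ (√·) ∘ hA.1.eigenvalues)).PosSemidef :=
    posSemidef_diagonal_iff.mpr fun i => by simp [Real.sqrt_nonneg]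
  simpa [PosSemidef.sqrt, star_eq_conjTranspose] using
    hE.mul_mul_conjTranspose_same (hA.1.eigenvectorUnitary : Matrix n n 𝕜)

end Matrix.PosSemidef

section Orthogonal

variable {m n : Type*} [Fintype m] [Fintype n]

lemma trace_transpose_mul_self (A : Matrix m n ℝ) : (Aᵀ * A).trace = ∑ i, ∑ j, A i j ^ 2 := by
  simp only [trace, diag, mul_apply, transpose_apply, sq]
  exact Finset.sum_comm

variable [DecidableEq n]

lemma trace_sub_orthogonal {B U : Matrix n n ℝ} (hU : Uᵀ * U = 1) :
    ((B - U)ᵀ * (B - U)).trace = (Bᵀ * B).trace - 2 * (Bᵀ * U).trace + Fintype.card n := by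
  have hUB : (Uᵀ * B).trace = (Bᵀ * U).trace := by
    rw [← trace_transpose, transpose_mul, transpose_transpose]
  rw [transpose_sub, sub_mul, mul_sub, mul_sub, hU]
  simp only [trace_sub, hUB, trace_one]
  ring

lemma trace_mul_orthogonal_le_trace {S Q : Matrix n n ℝ} (hS : S.PosSemidef) (hQ : Qᵀ * Q = 1) :
    (S * Q).trace ≤ S.trace := by
  set B := hS.sqrt
  have hBt : Bᵀ = B := isHermitian_iff_isSymm.mp hS.posSemidef_sqrt.1
  have hBB : B * B = S := hS.sqrt_mul_self
  have hBQB : (B * Q * B).trace = (S * Q).trace := by rw [trace_mul_cycle, hBB]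
  have hgap : ((Q * B - B)ᵀ * (Q * B - B)).trace = 2 * S.trace - 2 * (S * Q).trace := by
    have hBQtB : (B * Qᵀ * B).trace = (B * Q * B).trace := by
      rw [← trace_transpose, transpose_mul, transpose_mul, transpose_transpose, hBt, mul_assoc]
    rw [transpose_sub, transpose_mul, hBt, sub_mul, mul_sub, mul_sub]
    simp only [trace_sub, ← mul_assoc]
    rw [mul_assoc B Qᵀ Q, hQ, mul_one, hBB, hBQtB, hBQB]
    ring
  have hsq : 0 ≤ ((Q * B - B)ᵀ * (Q * B - B)).trace := by
    rw [trace_transpose_mul_self]; positivity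
  linarith

lemma det_sqrt_transpose_mul_self {F : Matrix n n ℝ} (hC : (Fᵀ * F).PosSemidef) :
    hC.sqrt.det = |F.det| := by
  have hsq : hC.sqrt.det ^ 2 = F.det ^ 2 := by
    rw [sq, ← det_mul, hC.sqrt_mul_self, det_mul, det_transpose, sq]
  rw [← abs_of_nonneg hC.posSemidef_sqrt.det_nonneg]
  exact (sq_eq_sq_iff_abs_eq_abs _ _).mp hsq

lemma isUnit_det_sqrt_transpose_mul_self {F : Matrix n n ℝ} (hC : (Fᵀ * F).PosSemidef)
    (hF : F.det ≠ 0) : IsUnit hC.sqrt.det := by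
  rw [det_sqrt_transpose_mul_self]
  exact (abs_pos.mpr hF).ne'.isUnit

lemma polar_factor_mul_sqrt {F : Matrix n n ℝ} (hC : (Fᵀ * F).PosSemidef) (hF : F.det ≠ 0) :
    F * hC.sqrt⁻¹ * hC.sqrt = F := by
  rw [mul_assoc, nonsing_inv_mul _ (isUnit_det_sqrt_transpose_mul_self hC hF), mul_one]

lemma polar_factor_orthogonal {F : Matrix n n ℝ} (hC : (Fᵀ * F).PosSemidef) (hF : F.det ≠ 0) :
    (F * hC.sqrt⁻¹)ᵀ * (F * hC.sqrt⁻¹) = 1 := by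
  set B := hC.sqrt
  have hBt : Bᵀ = B := isHermitian_iff_isSymm.mp hC.posSemidef_sqrt.1
  have hB : IsUnit B.det := isUnit_det_sqrt_transpose_mul_self hC hF
  have hBB : B * B = Fᵀ * F := hC.sqrt_mul_self
  calc (F * B⁻¹)ᵀ * (F * B⁻¹) = B⁻¹ * (Fᵀ * F) * B⁻¹ := by
        rw [transpose_mul, transpose_nonsing_inv, hBt]; simp only [mul_assoc]
    _ = (B⁻¹ * B) * (B * B⁻¹) := by rw [← hBB]; simp only [mul_assoc]
    _ = 1 := by rw [nonsing_inv_mul _ hB, mul_nonsing_inv _ hB, one_mul]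

end Orthogonal

lemma frob_eq_sqrt_trace (A : M3) : frob A = √(Aᵀ * A).trace := by
  rw [frob, trace_transpose_mul_self]

lemma frob_orthogonal_mul {U : M3} (hU : Uᵀ * U = 1) (A : M3) : frob (U * A) = frob A := by
  rw [frob_eq_sqrt_trace, frob_eq_sqrt_trace, transpose_mul, mul_assoc, ← mul_assoc Uᵀ, hU,
    one_mul]

lemma frob_sub_one_le_frob_sub_orthogonal {B U : M3} (hB : B.PosSemidef) (hU : Uᵀ * U = 1) :
    frob (B - 1) ≤ frob (B - U) := by
  have hBt : Bᵀ = B := isHermitian_iff_isSymm.mp hB.1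
  rw [frob_eq_sqrt_trace, frob_eq_sqrt_trace, trace_sub_orthogonal (by simp),
    trace_sub_orthogonal hU, hBt, mul_one]
  gcongr
  exact trace_mul_orthogonal_le_trace hB hU

lemma polar_factor_mem_SO3 {F : M3} (hF : 0 < F.det) (hC : (Fᵀ * F).PosSemidef) :
    F * hC.sqrt⁻¹ ∈ SO3 := by
  refine ⟨polar_factor_orthogonal hC hF.ne', ?_⟩
  rw [det_mul, det_nonsing_inv, det_sqrt_transpose_mul_self, abs_of_pos hF,
    Ring.inverse_eq_inv', mul_inv_cancel₀ hF.ne']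

/-- **Polar decomposition and the distance to `SO(3)`.**  For `F` with
`det F > 0` and polar decomposition `F = R √C`, `C = FᵀF`, `R = F(√C)⁻¹`:
`R ∈ SO(3)` and `dist(F, SO(3)) = |F − R| = |√C − I|`. -/
theorem polar_decomposition_dist_SO3
    (F : M3) (hF : 0 < F.det) (hC : (Fᵀ * F).PosSemidef) :
    F * hC.sqrt⁻¹ ∈ SO3 ∧
    frob (F - F * hC.sqrt⁻¹) = frob (hC.sqrt - 1) ∧
    distSO3 F = frob (F - F * hC.sqrt⁻¹) ∧
    ∀ Q ∈ SO3, frob (F - F * hC.sqrt⁻¹) ≤ frob (F - Q) := by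
  set B := hC.sqrt
  set R := F * B⁻¹
  have hR : R ∈ SO3 := polar_factor_mem_SO3 hF hC
  have hRB : R * B = F := polar_factor_mul_sqrt hC hF.ne'
  have hRRt : R * Rᵀ = 1 := mul_eq_one_comm.mp hR.1
  have hFR : frob (F - R) = frob (B - 1) := by
    rw [← frob_orthogonal_mul hR.1 (B - 1), mul_sub, mul_one, hRB]
  have hnearest : ∀ Q ∈ SO3, frob (F - R) ≤ frob (F - Q) := by
    intro Q hQ
    have hRtQ : (Rᵀ * Q)ᵀ * (Rᵀ * Q) = 1 := by
      rw [transpose_mul, transpose_transpose, mul_assoc, ← mul_assoc R, hRRt, one_mul, hQ.1]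
    calc frob (F - R) = frob (B - 1) := hFR
      _ ≤ frob (B - Rᵀ * Q) := frob_sub_one_le_frob_sub_orthogonal hC.posSemidef_sqrt hRtQ
      _ = frob (F - Q) := by
        rw [← frob_orthogonal_mul hR.1, mul_sub, ← mul_assoc, hRRt, one_mul, hRB]
  refine ⟨hR, hFR, ?_, hnearest⟩
  exact IsLeast.csInf_eq ⟨⟨R, hR, rfl⟩, by rintro _ ⟨Q, hQ, rfl⟩; exact hnearest Q hQ⟩
end
end

section
/- Let W: ℝ^{3×3} → [0,∞] be frame indifferent (W(RF) = W(F) for all R ∈ SO(3)), satisfy W(F) ≥ c·dist²(F,SO(3)) for all F and W(F) ≤ C·dist²(F,SO(3)) when dist²(F,SO(3)) ≤ ρ, and admit a quadratic expansion |W(I+G) − Q(G)| ≤ |G|² r(|G|) with r increasing and r(δ) → 0 as δ → 0, where Q is a quadratic form. Then c|sym G|² ≤ Q(G) ≤ C|sym G|² for all G ∈ ℝ^{3×3}; in particular Q(G) depends only on sym G. -/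
open Matrix Set Filter Topology
open scoped ENNReal

noncomputable section

/-- Symmetric part of a matrix. -/
def symPart (G : M3) : M3 := (1 / 2 : ℝ) • (G + Gᵀ)

/-!
Along the ray `t ↦ 1 + t • G`, the expansion gives `W (1 + t • G) = t² Q(G) + o(t²)`, while the
distance to `SO(3)` is `t |sym G| + o(t)`: from below because `sym (R - 1) = -½ (R - 1)ᵀ (R - 1)`
is quadratically small for every rotation `R`, from above by testing the rotations `exp (t A)`
generated by the skew part `A = G - sym G`. Dividing the two-sided bounds on `W` by `t²` and
letting `t → 0⁺` gives `c |sym G|² ≤ Q(G) ≤ C |sym G|²`. In particular `Q` is nonnegative and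
vanishes on skew matrices, which forces the polar form of `Q` to vanish against them.
-/

attribute [local instance] Matrix.frobeniusNormedAddCommGroup Matrix.frobeniusNormedSpace
  Matrix.frobeniusNormedRing Matrix.frobeniusNormedAlgebra

open NormedSpace

lemma frob_eq_norm (A : M3) : frob A = ‖A‖ := by
  rw [Matrix.frobenius_norm_def, ← Real.sqrt_eq_rpow, frob]
  simp only [Real.rpow_two, Real.norm_eq_abs, sq_abs]

lemma symPart_add (X Y : M3) : symPart (X + Y) = symPart X + symPart Y := by
  simp only [symPart, transpose_add]
  module

lemma symPart_sub (X Y : M3) : symPart (X - Y) = symPart X - symPart Y := by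
  simp only [symPart, transpose_sub]
  module

lemma symPart_smul (t : ℝ) (X : M3) : symPart (t • X) = t • symPart X := by
  simp only [symPart, transpose_smul]
  module

lemma norm_symPart_le (X : M3) : ‖symPart X‖ ≤ ‖X‖ := by
  calc ‖symPart X‖ = ‖X + Xᵀ‖ / 2 := by
        rw [symPart, norm_smul, Real.norm_of_nonneg (by norm_num)]; ring
    _ ≤ (‖X‖ + ‖Xᵀ‖) / 2 := by gcongr; exact norm_add_le _ _
    _ = ‖X‖ := by rw [frobenius_norm_transpose]; ring

lemma transpose_sub_symPart (X : M3) : (X - symPart X)ᵀ = -(X - symPart X) := by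
  simp only [symPart, transpose_sub, transpose_smul, transpose_add, transpose_transpose]
  module

lemma symPart_sub_one_of_transpose_mul_self {R : M3} (hR : Rᵀ * R = 1) :
    symPart (R - 1) = -(1 / 2 : ℝ) • ((R - 1)ᵀ * (R - 1)) := by
  simp only [symPart, transpose_sub, transpose_one, sub_mul, mul_sub, hR, mul_one, one_mul]
  module

lemma norm_symPart_sub_one_le_of_transpose_mul_self {R : M3} (hR : Rᵀ * R = 1) :
    ‖symPart (R - 1)‖ ≤ ‖R - 1‖ ^ 2 / 2 := by
  rw [symPart_sub_one_of_transpose_mul_self hR, neg_smul, norm_neg, norm_smul,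
    Real.norm_of_nonneg (by norm_num)]
  calc 1 / 2 * ‖(R - 1)ᵀ * (R - 1)‖ ≤ 1 / 2 * (‖(R - 1)ᵀ‖ * ‖R - 1‖) := by
        gcongr; exact frobenius_norm_mul _ _
    _ = ‖R - 1‖ ^ 2 / 2 := by rw [frobenius_norm_transpose]; ring

lemma one_mem_SO3 : (1 : M3) ∈ SO3 := ⟨by simp, by simp⟩

lemma exp_mem_SO3 {A : M3} (hA : Aᵀ = -A) : exp A ∈ SO3 := by
  have horth : (exp A)ᵀ * exp A = 1 := by
    rw [← Matrix.exp_transpose, hA, Matrix.exp_neg, Matrix.nonsing_inv_mul]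
    exact (Matrix.isUnit_iff_isUnit_det _).mp (Matrix.isUnit_exp A)
  refine ⟨horth, ?_⟩
  -- `det (exp A)` is a square, hence nonnegative, and squares to `1` by orthogonality.
  have hsq : (exp A).det = (exp ((1 / 2 : ℝ) • A)).det ^ 2 := by
    rw [sq, ← det_mul, ← Matrix.exp_add_of_commute _ _ (Commute.refl _), ← add_smul]
    norm_num
  have hdet : (exp A).det ^ 2 = 1 := by
    rw [← (det_one : (1 : M3).det = 1), ← horth, det_mul, det_transpose, sq]
  nlinarith [sq_nonneg (exp ((1 / 2 : ℝ) • A)).det]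

lemma distSO3_eq_sInf (F : M3) : distSO3 F = sInf ((fun R => ‖F - R‖) '' SO3) := by
  simp only [distSO3, frob_eq_norm]

lemma distSO3_le_norm_sub {F R : M3} (hR : R ∈ SO3) : distSO3 F ≤ ‖F - R‖ := by
  rw [distSO3_eq_sInf]
  refine csInf_le ⟨0, ?_⟩ ⟨R, hR, rfl⟩
  rintro _ ⟨R', -, rfl⟩
  exact norm_nonneg _

lemma le_distSO3 {F : M3} {a : ℝ} (h : ∀ R ∈ SO3, a ≤ ‖F - R‖) : a ≤ distSO3 F := by
  rw [distSO3_eq_sInf]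
  refine le_csInf ⟨_, 1, one_mem_SO3, rfl⟩ ?_
  rintro _ ⟨R, hR, rfl⟩
  exact h R hR

lemma distSO3_nonneg (F : M3) : 0 ≤ distSO3 F :=
  le_distSO3 fun _ _ => norm_nonneg _

lemma tendsto_distSO3_one_add_smul (G : M3) :
    Tendsto (fun t : ℝ => distSO3 (1 + t • G)) (𝓝 0) (𝓝 0) := by
  have hnorm : Tendsto (fun t : ℝ => ‖t • G‖) (𝓝 0) (𝓝 0) := by
    simpa using ((continuous_id.smul continuous_const).norm (E := M3)).tendsto' 0 _ (by simp)
  refine squeeze_zero (fun t => distSO3_nonneg _) (fun t => ?_) hnorm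
  simpa using distSO3_le_norm_sub (F := 1 + t • G) one_mem_SO3

lemma norm_symPart_sub_one_le (F : M3) : ‖symPart (F - 1)‖ ≤ distSO3 F + 2 * ‖F - 1‖ ^ 2 := by
  suffices h : ∀ R ∈ SO3, ‖symPart (F - 1)‖ - 2 * ‖F - 1‖ ^ 2 ≤ ‖F - R‖ by
    linarith [le_distSO3 h]
  intro R hR
  rcases le_or_gt ‖F - R‖ ‖F - 1‖ with hnear | hfar
  · have hR1 : ‖R - 1‖ ≤ 2 * ‖F - 1‖ := by
      calc ‖R - 1‖ = ‖(F - 1) - (F - R)‖ := by congr 1; abel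
        _ ≤ ‖F - 1‖ + ‖F - R‖ := norm_sub_le _ _
        _ ≤ 2 * ‖F - 1‖ := by linarith
    have hsym : ‖symPart (F - 1)‖ ≤ ‖F - R‖ + ‖R - 1‖ ^ 2 / 2 := by
      calc ‖symPart (F - 1)‖ = ‖symPart (F - R) + symPart (R - 1)‖ := by
            rw [← symPart_add, sub_add_sub_cancel]
        _ ≤ ‖symPart (F - R)‖ + ‖symPart (R - 1)‖ := norm_add_le _ _
        _ ≤ ‖F - R‖ + ‖R - 1‖ ^ 2 / 2 :=
            add_le_add (norm_symPart_le _) (norm_symPart_sub_one_le_of_transpose_mul_self hR.1)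
    nlinarith [norm_nonneg (R - 1)]
  · nlinarith [norm_symPart_le (F - 1)]

lemma tendsto_distSO3_one_add_smul_div (G : M3) :
    Tendsto (fun t : ℝ => distSO3 (1 + t • G) / t) (𝓝[>] 0) (𝓝 ‖symPart G‖) := by
  obtain ⟨A, hA⟩ : ∃ A, G - symPart G = A := ⟨_, rfl⟩
  have hslope : Tendsto (fun t : ℝ => ‖t⁻¹ • (exp (t • A) - 1) - A‖) (𝓝[>] 0) (𝓝 0) := by
    -- The library lemma is stated for the Frobenius normed ring; `exact` unfolds its
    -- topology to the product topology of `M3`, which `simpa` would not.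
    have hderiv : HasDerivAt (fun t : ℝ => exp (t • A)) A 0 := by
      have := hasDerivAt_exp_smul_const A (0 : ℝ)
      rw [zero_smul, exp_zero, one_mul] at this
      exact this
    have := hderiv.tendsto_slope_zero_right
    rw [tendsto_iff_norm_sub_tendsto_zero] at this
    simpa using this
  have hlower : Tendsto (fun t : ℝ => ‖symPart G‖ - 2 * t * ‖G‖ ^ 2) (𝓝[>] 0)
      (𝓝 ‖symPart G‖) :=
    ((Continuous.tendsto' (by fun_prop) 0 _ (by simp))).mono_left nhdsWithin_le_nhds
  refine tendsto_of_tendsto_of_tendsto_of_le_of_le' hlower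
    (by simpa using hslope.const_add ‖symPart G‖) ?_ ?_
  · filter_upwards [self_mem_nhdsWithin] with t (ht : 0 < t)
    have := norm_symPart_sub_one_le (1 + t • G)
    rw [add_sub_cancel_left, symPart_smul, norm_smul, norm_smul, Real.norm_of_nonneg ht.le] at this
    rw [le_div_iff₀ ht]
    nlinarith
  · filter_upwards [self_mem_nhdsWithin] with t (ht : 0 < t)
    have hrot : exp (t • A) ∈ SO3 :=
      exp_mem_SO3 (by rw [transpose_smul, ← hA, transpose_sub_symPart, smul_neg])
    have hdecomp : 1 + t • G - exp (t • A) = t • (symPart G - (t⁻¹ • (exp (t • A) - 1) - A)) := by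
      rw [smul_sub, smul_sub, smul_inv_smul₀ ht.ne', ← hA, smul_sub]
      abel
    rw [div_le_iff₀ ht]
    calc distSO3 (1 + t • G) ≤ ‖1 + t • G - exp (t • A)‖ := distSO3_le_norm_sub hrot
      _ ≤ t * (‖symPart G‖ + ‖t⁻¹ • (exp (t • A) - 1) - A‖) := by
        rw [hdecomp, norm_smul, Real.norm_of_nonneg ht.le]
        gcongr
        exact norm_sub_le _ _
      _ = _ := mul_comm _ _

section expansion

variable {E : Type*} [NormedAddCommGroup E] [NormedSpace ℝ E] {W : E → ℝ≥0∞} {Q : E → ℝ}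
  {r : ℝ → ℝ≥0∞} {F₀ G : E}

lemma tendsto_comp_norm_smul (hr0 : Tendsto r (𝓝[>] 0) (𝓝 0)) (hG : G ≠ 0) :
    Tendsto (fun t : ℝ => r ‖t • G‖) (𝓝[>] 0) (𝓝 0) := by
  refine hr0.comp (tendsto_nhdsWithin_iff.2 ⟨?_, ?_⟩)
  · exact ((Continuous.tendsto' (by fun_prop) 0 _ (by simp))).mono_left nhdsWithin_le_nhds
  · filter_upwards [self_mem_nhdsWithin] with t (ht : 0 < t)
    exact norm_pos_iff.2 (smul_ne_zero ht.ne' hG)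

lemma eventually_ne_top_of_expansion (hr0 : Tendsto r (𝓝[>] 0) (𝓝 0)) (hG : G ≠ 0)
    (hexp : ∀ H : E, r ‖H‖ ≠ ⊤ → W (F₀ + H) ≠ ⊤) :
    ∀ᶠ t : ℝ in 𝓝[>] 0, W (F₀ + t • G) ≠ ⊤ :=
  ((tendsto_comp_norm_smul hr0 hG).eventually_lt_const ENNReal.zero_lt_top).mono
    fun _ ht => hexp _ ht.ne

lemma tendsto_toReal_div_sq_of_expansion (hr0 : Tendsto r (𝓝[>] 0) (𝓝 0)) (hG : G ≠ 0)
    (hexp : ∀ H : E, r ‖H‖ ≠ ⊤ → |(W (F₀ + H)).toReal - Q H| ≤ ‖H‖ ^ 2 * (r ‖H‖).toReal)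
    (hQ : ∀ t : ℝ, Q (t • G) = t ^ 2 * Q G) :
    Tendsto (fun t : ℝ => (W (F₀ + t • G)).toReal / t ^ 2) (𝓝[>] 0) (𝓝 (Q G)) := by
  have hr : Tendsto (fun t : ℝ => ‖G‖ ^ 2 * (r ‖t • G‖).toReal) (𝓝[>] 0) (𝓝 0) := by
    simpa using ((ENNReal.tendsto_toReal ENNReal.zero_ne_top).comp
      (tendsto_comp_norm_smul hr0 hG)).const_mul (‖G‖ ^ 2)
  rw [tendsto_iff_norm_sub_tendsto_zero]
  refine squeeze_zero' (.of_forall fun _ => norm_nonneg _) ?_ hr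
  filter_upwards [self_mem_nhdsWithin,
    (tendsto_comp_norm_smul hr0 hG).eventually_lt_const ENNReal.zero_lt_top]
    with t (ht : 0 < t) hrt
  have hbound := hexp _ hrt.ne
  rw [hQ] at hbound
  generalize (r ‖t • G‖).toReal = ε at hbound ⊢
  have ht2 : 0 < t ^ 2 := by positivity
  calc ‖(W (F₀ + t • G)).toReal / t ^ 2 - Q G‖
      = |(W (F₀ + t • G)).toReal - t ^ 2 * Q G| / t ^ 2 := by
        rw [Real.norm_eq_abs, ← abs_of_pos ht2, ← abs_div, abs_of_pos ht2, sub_div,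
          mul_div_cancel_left₀ _ ht2.ne']
    _ ≤ ‖t • G‖ ^ 2 * ε / t ^ 2 := by gcongr
    _ = ‖G‖ ^ 2 * ε := by
        rw [norm_smul, Real.norm_of_nonneg ht.le]
        field_simp

end expansion

lemma eq_zero_of_forall_nonneg_add_mul {a b : ℝ} (h : ∀ t : ℝ, 0 ≤ a + t * b) : b = 0 := by
  by_contra hb
  have := h (-(a + 1) / b)
  rw [div_mul_cancel₀ _ hb] at this
  linarith

lemma le_of_tendsto_div_sq {f g : ℝ → ℝ} {a b : ℝ}
    (hf : Tendsto (fun t => f t / t ^ 2) (𝓝[>] 0) (𝓝 a))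
    (hg : Tendsto (fun t => g t / t ^ 2) (𝓝[>] 0) (𝓝 b)) (hfg : ∀ᶠ t in 𝓝[>] 0, f t ≤ g t) :
    a ≤ b :=
  le_of_tendsto_of_tendsto hf hg (hfg.mono fun _ h => div_le_div_of_nonneg_right h (sq_nonneg _))

lemma LinearMap.apply_self_eq_of_nonneg {E : Type*} [AddCommGroup E] [Module ℝ E]
    (B : E →ₗ[ℝ] E →ₗ[ℝ] ℝ) (hB : ∀ x, 0 ≤ B x x) {x y : E} (hxy : B (y - x) (y - x) = 0) :
    B y y = B x x := by
  obtain ⟨z, rfl⟩ : ∃ z, y = x + z := ⟨y - x, by abel⟩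
  rw [add_sub_cancel_left] at hxy
  have hpolar : B x z + B z x = 0 := by
    refine eq_zero_of_forall_nonneg_add_mul (a := B x x) fun t => ?_
    have := hB (x + t • z)
    simp only [map_add, map_smul, LinearMap.add_apply, LinearMap.smul_apply, smul_eq_mul,
      hxy] at this
    linarith
  simp only [map_add, LinearMap.add_apply, hxy]
  linarith

theorem quadratic_form_bounds_general
    (W : M3 → ℝ≥0∞) (Q : M3 → ℝ) (r : ℝ → ℝ≥0∞) (c C ρ : ℝ)
    (hc : 0 < c) (hcC : c ≤ C) (hρ : 0 < ρ)
    (hlow : ∀ F : M3, ENNReal.ofReal (c * distSO3 F ^ 2) ≤ W F)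
    (hup : ∀ F : M3, distSO3 F ^ 2 ≤ ρ → W F ≤ ENNReal.ofReal (C * distSO3 F ^ 2))
    (hQ : ∃ B : M3 →ₗ[ℝ] M3 →ₗ[ℝ] ℝ, ∀ G, Q G = B G G)
    (hr0 : Tendsto r (𝓝[>] (0 : ℝ)) (𝓝 0))
    (hexp : ∀ G : M3, r (frob G) ≠ ⊤ →
      W (1 + G) ≠ ⊤ ∧ |(W (1 + G)).toReal - Q G| ≤ frob G ^ 2 * (r (frob G)).toReal) :
    (∀ G : M3, c * frob (symPart G) ^ 2 ≤ Q G ∧ Q G ≤ C * frob (symPart G) ^ 2) ∧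
    ∀ G G' : M3, symPart G = symPart G' → Q G = Q G' := by
  obtain ⟨B, hB⟩ := hQ
  simp_rw [frob_eq_norm] at hexp ⊢
  have hbounds (G : M3) : c * ‖symPart G‖ ^ 2 ≤ Q G ∧ Q G ≤ C * ‖symPart G‖ ^ 2 := by
    rcases eq_or_ne G 0 with rfl | hG
    · simp [hB, symPart]
    have hd (k : ℝ) : Tendsto (fun t : ℝ => k * distSO3 (1 + t • G) ^ 2 / t ^ 2) (𝓝[>] 0)
        (𝓝 (k * ‖symPart G‖ ^ 2)) := by
      simpa only [mul_div_assoc, div_pow] using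
        ((tendsto_distSO3_one_add_smul_div G).pow 2).const_mul k
    have hw := tendsto_toReal_div_sq_of_expansion hr0 hG (fun H h => (hexp H h).2)
      fun t => by simp only [hB, map_smul, LinearMap.smul_apply, smul_eq_mul]; ring
    have hnear : ∀ᶠ t : ℝ in 𝓝[>] 0, distSO3 (1 + t • G) ^ 2 ≤ ρ :=
      (((tendsto_distSO3_one_add_smul G).pow 2).eventually
        (ge_mem_nhds (by simpa using hρ))).filter_mono nhdsWithin_le_nhds
    refine ⟨le_of_tendsto_div_sq (hd c) hw ?_, le_of_tendsto_div_sq hw (hd C) ?_⟩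
    · filter_upwards [eventually_ne_top_of_expansion hr0 hG fun H h => (hexp H h).1] with t ht
        using (ENNReal.ofReal_le_iff_le_toReal ht).1 (hlow _)
    · filter_upwards [hnear] with t ht
        using ENNReal.toReal_le_of_le_ofReal (mul_nonneg (hc.le.trans hcC) (sq_nonneg _)) (hup _ ht)
  refine ⟨hbounds, fun G G' hGG' => ?_⟩
  have hskew : Q (G' - G) = 0 := by
    have := hbounds (G' - G)
    rw [symPart_sub, hGG', sub_self, norm_zero] at this
    linarith
  rw [hB] at hskew
  rw [hB, hB]
  refine (LinearMap.apply_self_eq_of_nonneg B (fun x => ?_) hskew).symm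
  nlinarith [hB x ▸ (hbounds x).1, sq_nonneg ‖symPart x‖]

/-- **Bounds on the quadratic form in the expansion of a frame-indifferent,
non-degenerate energy density:** `c|sym G|² ≤ Q(G) ≤ C|sym G|²`, and `Q`
depends only on the symmetric part. -/
theorem quadratic_form_bounds
    (W : M3 → ℝ≥0∞) (Q : M3 → ℝ) (r : ℝ → ℝ≥0∞) (c C ρ : ℝ)
    (hc : 0 < c) (hcC : c ≤ C) (hρ : 0 < ρ)
    (hframe : ∀ R F : M3, R ∈ SO3 → W (R * F) = W F)
    (hlow : ∀ F : M3, ENNReal.ofReal (c * distSO3 F ^ 2) ≤ W F)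
    (hup : ∀ F : M3, distSO3 F ^ 2 ≤ ρ → W F ≤ ENNReal.ofReal (C * distSO3 F ^ 2))
    (hQ : ∃ B : M3 →ₗ[ℝ] M3 →ₗ[ℝ] ℝ, ∀ G, Q G = B G G)
    (hrmono : ∀ a b : ℝ, 0 ≤ a → a ≤ b → r a ≤ r b)
    (hr0 : Tendsto r (𝓝[>] (0 : ℝ)) (𝓝 0))
    (hexp : ∀ G : M3, r (frob G) ≠ ⊤ →
      W (1 + G) ≠ ⊤ ∧ |(W (1 + G)).toReal - Q G| ≤ frob G ^ 2 * (r (frob G)).toReal) :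
    (∀ G : M3, c * frob (symPart G) ^ 2 ≤ Q G ∧ Q G ≤ C * frob (symPart G) ^ 2) ∧
    ∀ G G' : M3, symPart G = symPart G' → Q G = Q G' :=
  quadratic_form_bounds_general W Q r c C ρ hc hcC hρ hlow hup hQ hr0 hexp
end
end
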